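/- arXiv:1604.02389 — 2 statements merged into one kernel-verified Lean document; each statement's English description precedes it below -/
import Mathlib

section
/- Let R be a commutative ring, z ∈ R, and let K be a cochain complex of R-modules such that multiplication by z is injective on K^n for every n. Then multiplication by z gives a short exact sequence of complexes 0 → K → K → K/zK → 0, and for every n the associated long exact cohomology sequence yields a short exact sequence 0 → H^n(K)/z·H^n(K) → H^n(K/zK) → {x ∈ H^{n+1}(K) : z·x = 0} → 0, where the first map is induced by the termwise quotient chain map K → K/zK and the second by the connecting homomorphism. -/
open CategoryTheory

/-- The submodule `z·M` of a module `M`, i.e. the range of multiplication by `z`. -/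
noncomputable def zSMulRange {R : Type*} [CommRing R] (z : R) (M : ModuleCat R) :
    Submodule R M :=
  LinearMap.range (z • (LinearMap.id : M →ₗ[R] M))

theorem modz_le {R : Type*} [CommRing R] (z : R) (K : CochainComplex (ModuleCat R) ℤ)
    (i j : ℤ) :
    zSMulRange z (K.X i) ≤ (zSMulRange z (K.X j)).comap (K.d i j).hom := by
  rintro x ⟨y, rfl⟩
  exact ⟨(K.d i j).hom y, by simp⟩

/-- The termwise quotient complex `K/zK` of a cochain complex of `R`-modules. -/
noncomputable def modz {R : Type*} [CommRing R] (z : R)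
    (K : CochainComplex (ModuleCat R) ℤ) : CochainComplex (ModuleCat R) ℤ where
  X n := ModuleCat.of R (K.X n ⧸ zSMulRange z (K.X n))
  d i j := ModuleCat.ofHom (Submodule.mapQ _ _ (K.d i j).hom (modz_le z K i j))
  shape i j h := by
    have hz : K.d i j = 0 := K.shape i j h
    apply ModuleCat.hom_ext
    apply Submodule.linearMap_qext
    apply LinearMap.ext
    intro y
    have hy : (K.d i j).hom y = 0 := by rw [hz]; rfl
    show ((zSMulRange z (K.X i)).mapQ (zSMulRange z (K.X j)) (K.d i j).hom (modz_le z K i j))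
        ((zSMulRange z (K.X i)).mkQ y) = 0
    rw [Submodule.mkQ_apply, Submodule.mapQ_apply, hy, Submodule.Quotient.mk_zero]
  d_comp_d' i j k hij hjk := by
    apply ModuleCat.hom_ext
    apply Submodule.linearMap_qext
    apply LinearMap.ext
    intro y
    have h0 : (K.d j k).hom ((K.d i j).hom y) = 0 := by
      have hdd := K.d_comp_d i j k
      calc (K.d j k).hom ((K.d i j).hom y) = (K.d i j ≫ K.d j k).hom y := rfl
        _ = (0 : K.X i ⟶ K.X k).hom y := by rw [hdd]
        _ = 0 := rfl
    show ((zSMulRange z (K.X j)).mapQ (zSMulRange z (K.X k)) (K.d j k).hom (modz_le z K j k))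
        (((zSMulRange z (K.X i)).mapQ (zSMulRange z (K.X j)) (K.d i j).hom (modz_le z K i j))
          ((zSMulRange z (K.X i)).mkQ y)) = 0
    rw [Submodule.mkQ_apply, Submodule.mapQ_apply, Submodule.mapQ_apply, h0,
      Submodule.Quotient.mk_zero]

/-- Multiplication by `z`, as a chain map `K ⟶ K`. -/
noncomputable def zSMulMap {R : Type*} [CommRing R] (z : R)
    (K : CochainComplex (ModuleCat R) ℤ) : K ⟶ K where
  f n := ModuleCat.ofHom (z • LinearMap.id : K.X n →ₗ[R] K.X n)
  comm' i j hij := by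
    apply ModuleCat.hom_ext
    apply LinearMap.ext
    intro x
    show (K.d i j).hom ((z • LinearMap.id : K.X i →ₗ[R] K.X i) x)
        = (z • LinearMap.id : K.X j →ₗ[R] K.X j) ((K.d i j).hom x)
    simp

/-- The termwise quotient chain map `K ⟶ K/zK`. -/
noncomputable def modzπ {R : Type*} [CommRing R] (z : R)
    (K : CochainComplex (ModuleCat R) ℤ) : K ⟶ modz z K where
  f n := ModuleCat.ofHom (zSMulRange z (K.X n)).mkQ
  comm' i j hij := by
    apply ModuleCat.hom_ext
    apply LinearMap.ext
    intro x
    show ((zSMulRange z (K.X i)).mapQ (zSMulRange z (K.X j)) (K.d i j).hom (modz_le z K i j))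
        ((zSMulRange z (K.X i)).mkQ x) = (zSMulRange z (K.X j)).mkQ ((K.d i j).hom x)
    rw [Submodule.mkQ_apply, Submodule.mkQ_apply, Submodule.mapQ_apply]

/-- The short complex `K --z--> K ⟶ K/zK` in the category of cochain complexes. -/
noncomputable def modzSES {R : Type*} [CommRing R] (z : R)
    (K : CochainComplex (ModuleCat R) ℤ) :
    ShortComplex (CochainComplex (ModuleCat R) ℤ) :=
  ShortComplex.mk (zSMulMap z K) (modzπ z K) (by
    ext n : 1
    apply ModuleCat.hom_ext
    apply LinearMap.ext
    intro x
    show (zSMulRange z (K.X n)).mkQ ((z • LinearMap.id : K.X n →ₗ[R] K.X n) x) = 0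
    exact (Submodule.Quotient.mk_eq_zero _).2 ⟨x, rfl⟩)

lemma HomologicalComplex.homologyMap_smul {R C ι : Type*} [Semiring R] [Category C]
    [Preadditive C] [Linear R C] {c : ComplexShape ι} {K L : HomologicalComplex C c}
    (r : R) (f : K ⟶ L) (i : ι) [K.HasHomology i] [L.HasHomology i] :
    homologyMap (r • f) i = r • homologyMap f i := by
  have hmap :
      (shortComplexFunctor C c i).map (r • f) = r • (shortComplexFunctor C c i).map f := by
    ext <;> rfl
  change ShortComplex.homologyMap _ = r • ShortComplex.homologyMap _
  rw [hmap, ShortComplex.homologyMap_smul]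
  rfl

section

variable {R : Type*} [CommRing R] (z : R) (K : CochainComplex (ModuleCat R) ℤ)

lemma zSMulMap_eq_smul_id : zSMulMap z K = z • 𝟙 K := rfl

lemma coe_homologyMap_zSMulMap (n : ℤ) :
    ⇑(HomologicalComplex.homologyMap (zSMulMap z K) n) = fun x : K.homology n => z • x := by
  rw [zSMulMap_eq_smul_id, HomologicalComplex.homologyMap_smul,
    HomologicalComplex.homologyMap_id]
  rfl

lemma modzSES_shortExact (hinj : ∀ n : ℤ, Function.Injective fun x : K.X n => z • x) :
    (modzSES z K).ShortExact := by
  rw [HomologicalComplex.shortExact_iff_degreewise_shortExact]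
  exact fun n => ModuleCat.shortComplex_shortExact _
    (LinearMap.exact_map_mkQ_range _) (hinj n) (Submodule.mkQ_surjective _)

end

/-- If `z` acts injectively on every term of a cochain complex `K` of
`R`-modules, then `0 → K → K → K/zK → 0` is a short exact sequence of complexes, and for every
`n` the associated long exact cohomology sequence yields a short exact sequence
`0 → Hⁿ(K)/z·Hⁿ(K) → Hⁿ(K/zK) → {x ∈ Hⁿ⁺¹(K) : z·x = 0} → 0`, where the first map is induced
by the termwise quotient chain map and the second by the connecting homomorphism.  This is
encoded by exactness of `Hⁿ(K) --z--> Hⁿ(K) --π--> Hⁿ(K/zK) --δ--> Hⁿ⁺¹(K) --z--> Hⁿ⁺¹(K)`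
at the three middle spots. -/
theorem modz_homology_short_exact {R : Type*} [CommRing R] (z : R)
    (K : CochainComplex (ModuleCat R) ℤ)
    (hinj : ∀ n : ℤ, Function.Injective fun x : K.X n => z • x) :
    ∃ hSE : (modzSES z K).ShortExact,
      ∀ n : ℤ,
        Function.Exact (fun x : K.homology n => z • x)
          ⇑(HomologicalComplex.homologyMap (modzπ z K) n) ∧
        Function.Exact ⇑(HomologicalComplex.homologyMap (modzπ z K) n)
          ⇑(hSE.δ n (n + 1) rfl) ∧
        Function.Exact ⇑(hSE.δ n (n + 1) rfl)
          (fun x : K.homology (n + 1) => z • x) := by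
  have hSE := modzSES_shortExact z K hinj
  refine ⟨hSE, fun n => ⟨?_, ?_, ?_⟩⟩
  · rw [← coe_homologyMap_zSMulMap]
    exact (ShortComplex.ShortExact.moduleCat_exact_iff_function_exact _).1
      (hSE.homology_exact₂ n)
  · exact (ShortComplex.ShortExact.moduleCat_exact_iff_function_exact _).1
      (hSE.homology_exact₃ n (n + 1) rfl)
  · rw [← coe_homologyMap_zSMulMap]
    exact (ShortComplex.ShortExact.moduleCat_exact_iff_function_exact _).1
      (hSE.homology_exact₁ n (n + 1) rfl)
end

section
/- Let R be a commutative ring and z ∈ R. Let f : F → K be a quasi-isomorphism of bounded cochain complexes of R-modules such that multiplication by z is injective on every term F^n and K^n and on every cohomology module H^n(F) and H^n(K). Then the induced chain map F/zF → K/zK between the termwise quotient complexes is again a quasi-isomorphism. -/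
/-!
Since multiplication by `z` is injective on each term, `0 → K --z--> K → K/zK → 0` is a short
exact sequence of complexes, natural in `K`. A chain map `f` induces a morphism between these
sequences for `F` and `K` which is a quasi-isomorphism on the first two terms, so the long exact
homology sequences and the five lemma make it a quasi-isomorphism on the third.
-/

open CategoryTheory

theorem modzMap_le {R : Type*} [CommRing R] (z : R) {F K : CochainComplex (ModuleCat R) ℤ}
    (f : F ⟶ K) (n : ℤ) :
    zSMulRange z (F.X n) ≤ (zSMulRange z (K.X n)).comap (f.f n).hom := by
  rintro x ⟨y, rfl⟩
  exact ⟨(f.f n).hom y, by simp⟩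

/-- The chain map `F/zF ⟶ K/zK` induced by a chain map `f : F ⟶ K` on the termwise
quotient complexes. -/
noncomputable def modzMap {R : Type*} [CommRing R] (z : R)
    {F K : CochainComplex (ModuleCat R) ℤ} (f : F ⟶ K) : modz z F ⟶ modz z K where
  f n := ModuleCat.ofHom (Submodule.mapQ _ _ (f.f n).hom (modzMap_le z f n))
  comm' i j hij := by
    apply ModuleCat.hom_ext
    apply Submodule.linearMap_qext
    apply LinearMap.ext
    intro x
    have hc : (K.d i j).hom ((f.f i).hom x) = (f.f j).hom ((F.d i j).hom x) := by
      calc (K.d i j).hom ((f.f i).hom x) = (f.f i ≫ K.d i j).hom x := rfl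
        _ = (F.d i j ≫ f.f j).hom x := by rw [f.comm i j]
        _ = (f.f j).hom ((F.d i j).hom x) := rfl
    show ((zSMulRange z (K.X i)).mapQ (zSMulRange z (K.X j)) (K.d i j).hom (modz_le z K i j))
        (((zSMulRange z (F.X i)).mapQ (zSMulRange z (K.X i)) (f.f i).hom (modzMap_le z f i))
          ((zSMulRange z (F.X i)).mkQ x))
      = ((zSMulRange z (F.X j)).mapQ (zSMulRange z (K.X j)) (f.f j).hom (modzMap_le z f j))
        (((zSMulRange z (F.X i)).mapQ (zSMulRange z (F.X j)) (F.d i j).hom (modz_le z F i j))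
          ((zSMulRange z (F.X i)).mkQ x))
    rw [Submodule.mkQ_apply, Submodule.mapQ_apply, Submodule.mapQ_apply,
      Submodule.mapQ_apply, Submodule.mapQ_apply, hc]

section

variable {R : Type*} [CommRing R] (z : R)

noncomputable def modzShortComplex (K : CochainComplex (ModuleCat R) ℤ) :
    ShortComplex (CochainComplex (ModuleCat R) ℤ) :=
  ShortComplex.mk (zSMulMap z K) (modzπ z K) (by
    ext n x
    exact (Submodule.Quotient.mk_eq_zero _).mpr ⟨x, rfl⟩)

theorem modzShortComplex_shortExact {K : CochainComplex (ModuleCat R) ℤ}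
    (hinj : ∀ n : ℤ, Function.Injective fun x : K.X n => z • x) :
    (modzShortComplex z K).ShortExact := by
  rw [HomologicalComplex.shortExact_iff_degreewise_shortExact]
  intro n
  refine { exact := ?_, mono_f := ?_, epi_g := ?_ }
  · rw [ShortComplex.moduleCat_exact_iff]
    intro x hx
    exact (Submodule.Quotient.mk_eq_zero _).mp hx
  · exact (ModuleCat.mono_iff_injective _).mpr (hinj n)
  · exact (ModuleCat.epi_iff_surjective _).mpr (Submodule.mkQ_surjective _)

noncomputable def modzShortComplexMap {F K : CochainComplex (ModuleCat R) ℤ} (f : F ⟶ K) :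
    modzShortComplex z F ⟶ modzShortComplex z K where
  τ₁ := f
  τ₂ := f
  τ₃ := modzMap z f
  comm₁₂ := by
    ext n x
    exact ((f.f n).hom.map_smul z x).symm
  comm₂₃ := rfl

end

theorem modzMap_quasiIso_general {R : Type*} [CommRing R] (z : R)
    {F K : CochainComplex (ModuleCat R) ℤ} (f : F ⟶ K)
    (hinjF : ∀ n : ℤ, Function.Injective fun x : F.X n => z • x)
    (hinjK : ∀ n : ℤ, Function.Injective fun x : K.X n => z • x)
    (hf : QuasiIso f) :
    QuasiIso (modzMap z f) :=
  HomologicalComplex.HomologySequence.quasiIso_τ₃ (modzShortComplexMap z f)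
    (modzShortComplex_shortExact z hinjF) (modzShortComplex_shortExact z hinjK) hf hf

/-- Let `f : F ⟶ K` be a quasi-isomorphism of bounded cochain complexes of
`R`-modules such that multiplication by `z` is injective on every term and on every cohomology
module of `F` and of `K`.  Then the induced chain map `F/zF ⟶ K/zK` between the termwise
quotient complexes is again a quasi-isomorphism. -/
theorem modzMap_quasiIso {R : Type*} [CommRing R] (z : R)
    {F K : CochainComplex (ModuleCat R) ℤ} (f : F ⟶ K)
    (hbddF : ∃ a b : ℤ, ∀ n : ℤ, (n < a ∨ b < n) → Limits.IsZero (F.X n))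
    (hbddK : ∃ a b : ℤ, ∀ n : ℤ, (n < a ∨ b < n) → Limits.IsZero (K.X n))
    (hinjF : ∀ n : ℤ, Function.Injective fun x : F.X n => z • x)
    (hinjK : ∀ n : ℤ, Function.Injective fun x : K.X n => z • x)
    (hinjHF : ∀ n : ℤ, Function.Injective fun x : F.homology n => z • x)
    (hinjHK : ∀ n : ℤ, Function.Injective fun x : K.homology n => z • x)
    (hf : QuasiIso f) :
    QuasiIso (modzMap z f) :=
  modzMap_quasiIso_general z f hinjF hinjK hf
end
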